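/- Let n ≥ 4 be even, k ∈ ℕ, and ℓ ∈ [0, n/2]. Then the number of homomorphisms in H⁰_{n,k} with exactly ℓ non-constant layers is |H⁰_{n,k}(ℓ)| = C(n−ℓ, ℓ) · C(n−2ℓ, n/2−ℓ) · (2^k − 2)^ℓ, where C(a,b) denotes the binomial coefficient. -/

import Mathlib

/-!
The non-constant layers of `f ∈ H⁰_{n,k}` form a set `S ⊆ ℤ_n ∖ {0}` with no two cyclically
adjacent elements: both neighbours of a non-constant layer are constant with a common value `c`,
and the layer itself takes both values `c ± 1`. There are `C(n - ℓ, ℓ)` such sets of size `ℓ`.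
Recording on every layer its top value (`c + 1` on a non-constant layer) gives a closed walk on
`ℤ` that must step up into and down out of each layer of `S`; of the remaining `n - 2ℓ` steps
exactly `n/2 - ℓ` go up, because the walk closes. Finally each non-constant layer chooses which
of its `k` vertices carry the top value: a non-constant map `Fin k → Bool`, in `2^k - 2` ways.
The three choices are independent and together determine `f`.
-/

open Filter

/-- The graph `C_{n,k}`: vertex set `ℤ_n × [k]`, with edges
`(i,s) ∼ (i+1,t)` for all `i ∈ ℤ_n` and `s,t ∈ [k]` (addition modulo `n`). -/
def Cnk (n k : ℕ) : SimpleGraph (ZMod n × Fin k) :=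
  SimpleGraph.fromRel fun a b => a.1 + 1 = b.1

/-- `f` is a graph homomorphism to `ℤ`: it changes by exactly `1` along edges. -/
def IsHomZ {V : Type} (G : SimpleGraph V) (f : V → ℤ) : Prop :=
  ∀ a b, G.Adj a b → |f a - f b| = 1

/-- `H_{n,k}`: homomorphisms from `C_{n,k}` to `ℤ` with `f(0,1) = 0`. -/
def Hnk (n k : ℕ) (hk : 0 < k) : Set (ZMod n × Fin k → ℤ) :=
  {f | IsHomZ (Cnk n k) f ∧ f (0, ⟨0, hk⟩) = 0}

/-- The `i`-layer is constant in `f`. -/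
def LayerConst {n k : ℕ} (f : ZMod n × Fin k → ℤ) (i : ZMod n) : Prop :=
  ∀ s t, f (i, s) = f (i, t)

/-- `NC(f)`: the set of non-constant layers of `f`. -/
def NCset {n k : ℕ} (f : ZMod n × Fin k → ℤ) : Set (ZMod n) :=
  {i | ¬ LayerConst f i}

/-- `H⁰_{n,k}`: homomorphisms in `H_{n,k}` mapping the whole `0`-layer to `0`. -/
def H0nk (n k : ℕ) (hk : 0 < k) : Set (ZMod n × Fin k → ℤ) :=
  {f | f ∈ Hnk n k hk ∧ ∀ s, f (0, s) = 0}

/-- The range size `R(f)`: the number of distinct values taken by `f`. -/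
noncomputable def rngZ {V : Type} (f : V → ℤ) : ℕ := (Set.range f).ncard

/-- `H⁰_{n,k}(ℓ)`: homomorphisms in `H⁰_{n,k}` with exactly `ℓ` non-constant
layers. -/
def H0nkL (n k : ℕ) (hk : 0 < k) (ℓ : ℕ) : Set (ZMod n × Fin k → ℤ) :=
  {f | f ∈ H0nk n k hk ∧ (NCset f).ncard = ℓ}

open Finset

lemma eq_of_abs_sub_eq_one {x y u u' : ℤ} (hxy : x ≠ y) (hxu : |x - u| = 1) (hyu : |y - u| = 1)
    (hxu' : |x - u'| = 1) (hyu' : |y - u'| = 1) : u = u' := by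
  rw [abs_eq zero_le_one] at hxu hyu hxu' hyu'
  omega

section Homomorphism
variable {n k : ℕ} {f : ZMod n × Fin k → ℤ}

instance (f : ZMod n × Fin k → ℤ) (i : ZMod n) : Decidable (LayerConst f i) :=
  inferInstanceAs (Decidable (∀ s t, f (i, s) = f (i, t)))

lemma Cnk_adj_iff {a b : ZMod n × Fin k} :
    (Cnk n k).Adj a b ↔ a ≠ b ∧ (a.1 + 1 = b.1 ∨ b.1 + 1 = a.1) :=
  SimpleGraph.fromRel_adj _ _ _

lemma Cnk_adj_add_one [Nontrivial (ZMod n)] (i : ZMod n) (s t : Fin k) :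
    (Cnk n k).Adj (i, s) (i + 1, t) :=
  Cnk_adj_iff.mpr ⟨fun h => by simpa using congrArg Prod.fst h, Or.inl rfl⟩

lemma layerConst_zero (h0 : ∀ s, f (0, s) = 0) : LayerConst f 0 := fun s t => by
  rw [h0, h0]

variable [Nontrivial (ZMod n)] (hf : IsHomZ (Cnk n k) f)
include hf

lemma IsHomZ.abs_sub_add_one (i : ZMod n) (s t : Fin k) : |f (i, s) - f (i + 1, t)| = 1 :=
  hf _ _ (Cnk_adj_add_one i s t)

lemma IsHomZ.abs_sub_sub_one (i : ZMod n) (s t : Fin k) : |f (i, s) - f (i - 1, t)| = 1 := by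
  simpa [abs_sub_comm] using hf.abs_sub_add_one (i - 1) t s

lemma IsHomZ.exists_of_not_layerConst {i : ZMod n} (h : ¬LayerConst f i) :
    ∃ c, (∀ t, f (i + 1, t) = c) ∧ (∀ t, f (i - 1, t) = c) ∧
      ∀ s, f (i, s) = c + 1 ∨ f (i, s) = c - 1 := by
  simp only [LayerConst, not_forall] at h
  obtain ⟨s₁, s₂, hs⟩ := h
  have hc : ∀ t, f (i - 1, t) = f (i + 1, s₁) := fun t =>
    eq_of_abs_sub_eq_one hs (hf.abs_sub_sub_one i s₁ t) (hf.abs_sub_sub_one i s₂ t)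
      (hf.abs_sub_add_one i s₁ s₁) (hf.abs_sub_add_one i s₂ s₁)
  refine ⟨f (i + 1, s₁), fun t => ?_, hc, fun s => ?_⟩
  · exact eq_of_abs_sub_eq_one hs (hf.abs_sub_add_one i s₁ t) (hf.abs_sub_add_one i s₂ t)
      (hf.abs_sub_add_one i s₁ s₁) (hf.abs_sub_add_one i s₂ s₁)
  · have := hf.abs_sub_add_one i s s₁
    rw [abs_eq zero_le_one] at this
    omega

lemma IsHomZ.layerConst_add_one {i : ZMod n} (h : ¬LayerConst f i) : LayerConst f (i + 1) := by
  obtain ⟨c, hc, -⟩ := hf.exists_of_not_layerConst h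
  intro s t
  rw [hc, hc]

lemma IsHomZ.layerConst_of_not_layerConst_add_one {i : ZMod n} (h : ¬LayerConst f (i + 1)) :
    LayerConst f i := by
  obtain ⟨c, -, hc, -⟩ := hf.exists_of_not_layerConst h
  intro s t
  rw [← add_sub_cancel_right i 1, hc, hc]

end Homomorphism

def topValue {n k : ℕ} (s₀ : Fin k) (f : ZMod n × Fin k → ℤ) (i : ZMod n) : ℤ :=
  if LayerConst f i then f (i, s₀) else f (i + 1, s₀) + 1

lemma IsHomZ.eq_topValue_or {n k : ℕ} [Nontrivial (ZMod n)] {f : ZMod n × Fin k → ℤ}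
    (hf : IsHomZ (Cnk n k) f) (s₀ : Fin k) (i : ZMod n) (s : Fin k) :
    f (i, s) = topValue s₀ f i ∨ f (i, s) = topValue s₀ f i - 2 := by
  unfold topValue
  split_ifs with h
  · exact .inl (h s s₀)
  · obtain ⟨c, hc, -, hs⟩ := hf.exists_of_not_layerConst h
    rw [hc]
    have := hs s
    omega

section SparseSets

def sparseSubsets (N ℓ : ℕ) : Finset (Finset ℕ) :=
  ((Ico 1 N).powersetCard ℓ).filter fun A => ∀ a ∈ A, a + 1 ∉ A

lemma mem_sparseSubsets {N ℓ : ℕ} {A : Finset ℕ} :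
    A ∈ sparseSubsets N ℓ ↔ A ⊆ Ico 1 N ∧ #A = ℓ ∧ ∀ a ∈ A, a + 1 ∉ A := by
  simp [sparseSubsets, and_assoc]

lemma sparseSubsets_filter_notMem (N ℓ : ℕ) :
    (sparseSubsets (N + 2) ℓ).filter (N + 1 ∉ ·) = sparseSubsets (N + 1) ℓ := by
  ext A
  simp only [mem_filter, mem_sparseSubsets, subset_iff, mem_Ico]
  grind

lemma card_sparseSubsets_filter_mem (N ℓ : ℕ) :
    #((sparseSubsets (N + 2) (ℓ + 1)).filter (N + 1 ∈ ·)) = #(sparseSubsets N ℓ) := by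
  refine card_nbij' (·.erase (N + 1)) (insert (N + 1)) ?_ ?_ ?_ ?_
  · intro A hA
    simp only [mem_coe, mem_filter, mem_sparseSubsets, subset_iff, mem_Ico,
      mem_erase] at hA ⊢
    grind
  · intro A hA
    simp only [mem_coe, mem_filter, mem_sparseSubsets, subset_iff, mem_Ico,
      mem_insert] at hA ⊢
    grind
  · intro A hA
    exact insert_erase (mem_filter.mp hA).2
  · intro A hA
    simp only [mem_coe, mem_sparseSubsets, subset_iff, mem_Ico] at hA
    exact erase_insert fun h => by grind

lemma card_sparseSubsets (N ℓ : ℕ) : #(sparseSubsets N ℓ) = (N - ℓ).choose ℓ := by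
  induction N using Nat.strong_induction_on generalizing ℓ with
  | _ N ih =>
    match N, ℓ with
    | N, 0 => simp [sparseSubsets, powersetCard_zero, filter_singleton]
    | 0, ℓ + 1 | 1, ℓ + 1 => simp [sparseSubsets]
    | N + 2, ℓ + 1 =>
      rw [← card_filter_add_card_filter_not (N + 1 ∈ ·), sparseSubsets_filter_notMem,
        card_sparseSubsets_filter_mem, ih N (by omega), ih (N + 1) (by omega)]
      rcases lt_or_ge N ℓ with h | h
      · rw [Nat.choose_eq_zero_of_lt (by omega), Nat.choose_eq_zero_of_lt (by omega),
          Nat.choose_eq_zero_of_lt (by omega)]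
      · rw [show N + 2 - (ℓ + 1) = N - ℓ + 1 by omega, show N + 1 - (ℓ + 1) = N - ℓ by omega,
          Nat.choose_succ_succ', add_comm]

variable {n : ℕ} [NeZero n]

def sparseSets (n ℓ : ℕ) [NeZero n] : Finset (Finset (ZMod n)) :=
  (univ.powersetCard ℓ).filter fun S => 0 ∉ S ∧ ∀ i ∈ S, i + 1 ∉ S

lemma mem_sparseSets {ℓ : ℕ} {S : Finset (ZMod n)} :
    S ∈ sparseSets n ℓ ↔ #S = ℓ ∧ 0 ∉ S ∧ ∀ i ∈ S, i + 1 ∉ S := by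
  simp [sparseSets]

lemma image_val_mem_sparseSubsets {ℓ : ℕ} {S : Finset (ZMod n)} (hS : S ∈ sparseSets n ℓ) :
    S.image ZMod.val ∈ sparseSubsets n ℓ := by
  obtain ⟨hcard, h0, hsparse⟩ := mem_sparseSets.mp hS
  refine mem_sparseSubsets.mpr ⟨fun a ha => ?_, ?_, ?_⟩
  · obtain ⟨x, hx, rfl⟩ := mem_image.mp ha
    have : x.val ≠ 0 := fun h => h0 ((ZMod.val_eq_zero x).mp h ▸ hx)
    exact mem_Ico.mpr ⟨Nat.one_le_iff_ne_zero.mpr this, x.val_lt⟩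
  · rw [card_image_of_injective _ (ZMod.val_injective n), hcard]
  · simp only [mem_image, forall_exists_index, and_imp, not_exists, not_and]
    rintro _ x hx rfl y hy hxy
    refine hsparse x hx ?_
    rwa [← ZMod.natCast_zmod_val y, hxy, Nat.cast_succ, ZMod.natCast_zmod_val] at hy

lemma image_natCast_mem_sparseSets {ℓ : ℕ} {A : Finset ℕ} (hA : A ∈ sparseSubsets n ℓ) :
    A.image ((↑) : ℕ → ZMod n) ∈ sparseSets n ℓ := by
  obtain ⟨hsub, hcard, hsparse⟩ := mem_sparseSubsets.mp hA
  simp only [subset_iff, mem_Ico] at hsub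
  have hval : ∀ a ∈ A, (a : ZMod n).val = a := fun a ha => ZMod.val_cast_of_lt (hsub ha).2
  refine mem_sparseSets.mpr ⟨?_, ?_, ?_⟩
  · rw [card_image_of_injOn fun a ha b hb h => by rw [← hval a ha, ← hval b hb, h], hcard]
  · simp only [mem_image, not_exists, not_and]
    intro a ha h
    have := hval a ha
    rw [h, ZMod.val_zero] at this
    exact absurd (hsub ha).1 (by omega)
  · simp only [mem_image, forall_exists_index, and_imp, not_exists, not_and]
    rintro _ a ha rfl b hb hab
    have hb' : b = ((a + 1 : ℕ) : ZMod n).val := by rw [← hval b hb, hab, Nat.cast_add_one]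
    rcases Nat.lt_or_ge (a + 1) n with h | h
    · rw [ZMod.val_cast_of_lt h] at hb'
      exact hsparse a ha (hb' ▸ hb)
    · rw [le_antisymm (hsub ha).2 h, ZMod.natCast_self, ZMod.val_zero] at hb'
      exact absurd (hsub hb).1 (by omega)

lemma card_sparseSets (ℓ : ℕ) : #(sparseSets n ℓ) = (n - ℓ).choose ℓ := by
  rw [← card_sparseSubsets]
  refine card_nbij' (·.image ZMod.val) (·.image (↑)) (fun _ hS => image_val_mem_sparseSubsets hS)
    (fun _ hA => image_natCast_mem_sparseSets hA) (fun S _ => by simp [image_image]) ?_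
  intro A hA
  have hsub := (mem_sparseSubsets.mp hA).1
  dsimp only
  rw [image_image]
  exact (image_congr fun a ha => ZMod.val_cast_of_lt (mem_Ico.mp (hsub ha)).2).trans image_id

end SparseSets

section Walk
variable {n : ℕ}

def cycleWalk (d : ZMod n → ℤ) (i : ZMod n) : ℤ := ∑ j ∈ range i.val, d j

lemma cycleWalk_zero (d : ZMod n → ℤ) : cycleWalk d 0 = 0 := by
  simp [cycleWalk]

variable [NeZero n]

lemma sum_range_natCast (d : ZMod n → ℤ) : ∑ j ∈ range n, d j = ∑ i, d i :=
  sum_nbij' (↑) ZMod.val (by simp) (by simp [ZMod.val_lt])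
    (fun j hj => ZMod.val_cast_of_lt (mem_range.mp hj)) (fun i _ => ZMod.natCast_zmod_val i)
    (fun _ _ => rfl)

lemma cycleWalk_add_one {d : ZMod n → ℤ} (hd : ∑ i, d i = 0) (i : ZMod n) :
    cycleWalk d (i + 1) = cycleWalk d i + d i := by
  have hsucc : ∑ j ∈ range (i.val + 1), d j = cycleWalk d i + d i := by
    rw [sum_range_succ, ZMod.natCast_zmod_val, cycleWalk]
  rcases Nat.lt_or_ge (i.val + 1) n with h | h
  · have : i + 1 = ((i.val + 1 : ℕ) : ZMod n) := by push_cast [ZMod.natCast_zmod_val]; rfl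
    rw [← hsucc, cycleWalk, this, ZMod.val_cast_of_lt h]
  · replace h : i.val + 1 = n := le_antisymm i.val_lt h
    have : i + 1 = 0 := by
      rw [← ZMod.natCast_zmod_val i, ← Nat.cast_add_one, h, ZMod.natCast_self]
    rw [this, cycleWalk_zero, ← hsucc, h, sum_range_natCast, hd]

lemma eq_of_sub_eq_sub {g g' : ZMod n → ℤ} (h0 : g 0 = g' 0)
    (h : ∀ i, g (i + 1) - g i = g' (i + 1) - g' i) : g = g' := by
  have hnat : ∀ m : ℕ, g m = g' m := by
    intro m
    induction m with
    | zero => simpa using h0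
    | succ m ih => have := h m; push_cast; omega
  funext i
  rw [← ZMod.natCast_zmod_val i, hnat]

lemma sum_sub_add_one (g : ZMod n → ℤ) : ∑ i, (g (i + 1) - g i) = 0 := by
  rw [sum_sub_distrib, sub_eq_zero]
  exact Fintype.sum_equiv (Equiv.addRight 1) _ _ fun _ => rfl

end Walk

section Steps
variable {n : ℕ}

def layerStep (S E : Finset (ZMod n)) (j : ZMod n) : ℤ :=
  if j + 1 ∈ S then 1 else if j ∈ S then -1 else if j ∈ E then 1 else -1

variable [NeZero n]

def freeSteps (S : Finset (ZMod n)) : Finset (ZMod n) :=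
  univ.filter fun j => j ∉ S ∧ j + 1 ∉ S

lemma card_filter_add_one_mem (S : Finset (ZMod n)) :
    #(univ.filter fun j : ZMod n => j + 1 ∈ S) = #S :=
  card_equiv (Equiv.addRight 1) (by simp)

lemma card_freeSteps_add {S : Finset (ZMod n)} (hS : ∀ i ∈ S, i + 1 ∉ S) :
    #(freeSteps S) + 2 * #S = n := by
  have hdisj : Disjoint (univ.filter (· ∈ S)) (univ.filter fun j : ZMod n => j + 1 ∈ S) :=
    disjoint_filter.mpr fun i _ => hS i
  have hsplit := card_filter_add_card_filter_not (s := univ) fun j : ZMod n => j ∈ S ∨ j + 1 ∈ S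
  rw [filter_or, card_union_of_disjoint hdisj, filter_univ_mem, card_filter_add_one_mem,
    card_univ, ZMod.card] at hsplit
  simp only [not_or] at hsplit
  rw [freeSteps]
  omega

lemma sum_layerStep {S E : Finset (ZMod n)} (hE : E ⊆ freeSteps S) :
    ∑ j, layerStep S E j = 2 * (#S + #E) - n := by
  have hstep : ∀ j, layerStep S E j = 2 * (if j + 1 ∈ S ∨ j ∈ E then 1 else 0) - 1 := by
    intro j
    have := @hE j
    simp only [freeSteps, mem_filter, mem_univ, true_and] at this
    unfold layerStep
    split_ifs <;> simp_all
  have hdisj : Disjoint (univ.filter fun j : ZMod n => j + 1 ∈ S) (univ.filter (· ∈ E)) :=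
    disjoint_filter.mpr fun j _ h hj => (mem_filter.mp (hE hj)).2.2 h
  simp only [hstep, sum_sub_distrib, ← mul_sum, sum_boole]
  rw [filter_or, card_union_of_disjoint hdisj, card_filter_add_one_mem, filter_univ_mem]
  simp

end Steps

section Decoding
variable {n k : ℕ} [NeZero n] (s₀ : Fin k) (f : ZMod n × Fin k → ℤ)

def nonconstLayers : Finset (ZMod n) := univ.filter fun i => ¬LayerConst f i

def upSteps : Finset (ZMod n) :=
  (freeSteps (nonconstLayers f)).filter fun j => f (j + 1, s₀) = f (j, s₀) + 1

lemma upSteps_subset : upSteps s₀ f ⊆ freeSteps (nonconstLayers f) :=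
  filter_subset _ _

variable {f}

@[simp]
lemma mem_nonconstLayers {i : ZMod n} : i ∈ nonconstLayers f ↔ ¬LayerConst f i := by
  simp [nonconstLayers]

lemma coe_nonconstLayers : (nonconstLayers f : Set (ZMod n)) = NCset f := by
  ext i
  simp [nonconstLayers, NCset]

variable [Nontrivial (ZMod n)] (hf : IsHomZ (Cnk n k) f)
include hf

lemma IsHomZ.topValue_add_one (i : ZMod n) :
    topValue s₀ f (i + 1) = topValue s₀ f i + layerStep (nonconstLayers f) (upSteps s₀ f) i := by
  simp only [topValue, layerStep, nonconstLayers, upSteps, freeSteps, mem_filter, mem_univ,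
    true_and]
  by_cases hi₁ : LayerConst f (i + 1)
  · by_cases hi : LayerConst f i
    · have := hf.abs_sub_add_one i s₀ s₀
      rw [abs_eq zero_le_one] at this
      simp only [hi, hi₁, not_true_eq_false, not_false_eq_true, and_self, true_and, if_true,
        if_false]
      split_ifs <;> omega
    · obtain ⟨c, hc, -⟩ := hf.exists_of_not_layerConst hi
      simp [hi, hi₁, hc]
  · have hi := hf.layerConst_of_not_layerConst_add_one hi₁
    obtain ⟨c, hc, hc', -⟩ := hf.exists_of_not_layerConst hi₁
    rw [add_sub_cancel_right] at hc'
    simp [hi, hi₁, hc, hc']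

lemma IsHomZ.sum_layerStep_eq_zero :
    ∑ j, layerStep (nonconstLayers f) (upSteps s₀ f) j = 0 := by
  rw [← sum_sub_add_one (topValue s₀ f)]
  exact sum_congr rfl fun j _ => by rw [hf.topValue_add_one s₀, add_sub_cancel_left]

end Decoding

section Codes

def nonconstFuns (k : ℕ) : Finset (Fin k → Bool) :=
  univ.filter fun g => ∃ s t, g s ≠ g t

lemma card_nonconstFuns {k : ℕ} (hk : 0 < k) : #(nonconstFuns k) = 2 ^ k - 2 := by
  have : Nonempty (Fin k) := ⟨⟨0, hk⟩⟩
  have hconst : univ.filter (fun g : Fin k → Bool => ¬∃ s t, g s ≠ g t) =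
      univ.image (Function.const (Fin k)) := by
    ext g
    simp only [mem_filter, mem_univ, true_and, not_exists, not_not, mem_image]
    refine ⟨fun h => ⟨g ⟨0, hk⟩, funext fun s => h _ _⟩, ?_⟩
    rintro ⟨b, rfl⟩ s t
    rfl
  have hsplit := card_filter_add_card_filter_not (s := univ) fun g : Fin k → Bool => ∃ s t, g s ≠ g t
  rw [hconst, card_image_of_injective _ Function.const_injective] at hsplit
  simp only [card_univ, Fintype.card_bool, Fintype.card_fun, Fintype.card_fin] at hsplit
  rw [nonconstFuns]
  omega

/-- `⟨S, E, φ⟩`: the non-constant layers, the up-steps among the free steps, and on each layer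
the vertices that carry the top value. -/
abbrev Code (n k : ℕ) := Σ _ : Finset (ZMod n), Finset (ZMod n) × (ZMod n → Fin k → Bool)

variable {n : ℕ} [NeZero n] {k : ℕ}

def layerPatterns (k : ℕ) (S : Finset (ZMod n)) : Finset (ZMod n → Fin k → Bool) :=
  Fintype.piFinset fun i => if i ∈ S then nonconstFuns k else {fun _ => true}

lemma mem_layerPatterns {S : Finset (ZMod n)} {φ : ZMod n → Fin k → Bool} :
    φ ∈ layerPatterns k S ↔
      (∀ i ∈ S, ∃ s t, φ i s ≠ φ i t) ∧ ∀ i ∉ S, ∀ s, φ i s = true := by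
  simp only [layerPatterns, Fintype.mem_piFinset]
  refine ⟨fun h => ⟨fun i hi => ?_, fun i hi s => ?_⟩, fun h i => ?_⟩
  · simpa [hi, nonconstFuns] using h i
  · simpa [hi] using congrFun (mem_singleton.mp (by simpa [hi] using h i)) s
  · by_cases hi : i ∈ S
    · simpa [hi, nonconstFuns] using h.1 i hi
    · simpa [hi, funext_iff] using h.2 i hi

lemma card_layerPatterns (hk : 0 < k) (S : Finset (ZMod n)) :
    #(layerPatterns k S) = (2 ^ k - 2) ^ #S := by
  rw [layerPatterns, Fintype.card_piFinset]
  simp only [apply_ite card, card_nonconstFuns hk, card_singleton]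
  rw [prod_ite, prod_const, prod_const_one, mul_one, filter_univ_mem]

variable (n k) in
def codes (ℓ : ℕ) : Finset (Code n k) :=
  (sparseSets n ℓ).sigma fun S => (freeSteps S).powersetCard (n / 2 - ℓ) ×ˢ layerPatterns k S

lemma mem_codes {ℓ : ℕ} {S E : Finset (ZMod n)} {φ : ZMod n → Fin k → Bool} :
    ⟨S, E, φ⟩ ∈ codes n k ℓ ↔
      S ∈ sparseSets n ℓ ∧ E ⊆ freeSteps S ∧ #E = n / 2 - ℓ ∧ φ ∈ layerPatterns k S := by
  simp [codes, and_assoc]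

lemma card_codes (hk : 0 < k) (ℓ : ℕ) :
    #(codes n k ℓ) = (n - ℓ).choose ℓ * (n - 2 * ℓ).choose (n / 2 - ℓ) * (2 ^ k - 2) ^ ℓ := by
  rw [codes, card_sigma, ← card_sparseSets, mul_assoc, ← smul_eq_mul, ← sum_const]
  refine sum_congr rfl fun S hS => ?_
  obtain ⟨hcard, -, hsparse⟩ := mem_sparseSets.mp hS
  have := card_freeSteps_add hsparse
  rw [card_product, card_powersetCard, card_layerPatterns hk, hcard,
    show #(freeSteps S) = n - 2 * ℓ by omega]

end Codes

section Encoding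
variable {n k : ℕ}

def ofCode (p : Code n k) (x : ZMod n × Fin k) : ℤ :=
  cycleWalk (layerStep p.1 p.2.1) x.1 - if p.2.2 x.1 x.2 then 0 else 2

lemma layerConst_ofCode_iff {p : Code n k} {i : ZMod n} :
    LayerConst (ofCode p) i ↔ ∀ s t, p.2.2 i s = p.2.2 i t := by
  refine forall₂_congr fun s t => ?_
  simp only [ofCode]
  cases p.2.2 i s <;> cases p.2.2 i t <;> simp; omega

variable [NeZero n]

def toCode (s₀ : Fin k) (f : ZMod n × Fin k → ℤ) : Code n k :=
  ⟨nonconstLayers f, upSteps s₀ f, fun i s => decide (f (i, s) = topValue s₀ f i)⟩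

variable {ℓ : ℕ} {S E : Finset (ZMod n)} {φ : ZMod n → Fin k → Bool}

lemma sum_layerStep_eq_zero_of_mem_codes (hn : Even n) (hp : ⟨S, E, φ⟩ ∈ codes n k ℓ) :
    ∑ j, layerStep S E j = 0 := by
  obtain ⟨hS, hE, hEcard, -⟩ := mem_codes.mp hp
  obtain ⟨hScard, -, hsparse⟩ := mem_sparseSets.mp hS
  have := card_freeSteps_add hsparse
  obtain ⟨m, rfl⟩ := hn
  rw [sum_layerStep hE, hEcard, hScard]
  omega

lemma nonconstLayers_ofCode (hp : ⟨S, E, φ⟩ ∈ codes n k ℓ) :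
    nonconstLayers (ofCode ⟨S, E, φ⟩) = S := by
  obtain ⟨-, -, -, hφ⟩ := mem_codes.mp hp
  obtain ⟨hφS, hφ_notMem⟩ := mem_layerPatterns.mp hφ
  ext i
  simp only [nonconstLayers, mem_filter, mem_univ, true_and, layerConst_ofCode_iff, not_forall]
  by_cases hi : i ∈ S
  · simpa [hi] using hφS i hi
  · simp [hi, hφ_notMem i hi]

lemma ofCode_of_notMem (hp : ⟨S, E, φ⟩ ∈ codes n k ℓ) {i : ZMod n} (hi : i ∉ S) (s : Fin k) :
    ofCode ⟨S, E, φ⟩ (i, s) = cycleWalk (layerStep S E) i := by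
  simp [ofCode, (mem_layerPatterns.mp (mem_codes.mp hp).2.2.2).2 i hi s]

lemma cycleWalk_layerStep_add_one (hn : Even n) (hp : ⟨S, E, φ⟩ ∈ codes n k ℓ) (i : ZMod n) :
    cycleWalk (layerStep S E) (i + 1) = cycleWalk (layerStep S E) i + layerStep S E i :=
  cycleWalk_add_one (sum_layerStep_eq_zero_of_mem_codes hn hp) i

lemma abs_ofCode_sub_ofCode_add_one (hn : Even n) (hp : ⟨S, E, φ⟩ ∈ codes n k ℓ) (i : ZMod n)
    (s t : Fin k) : |ofCode ⟨S, E, φ⟩ (i, s) - ofCode ⟨S, E, φ⟩ (i + 1, t)| = 1 := by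
  have hsparse := (mem_sparseSets.mp (mem_codes.mp hp).1).2.2
  have hstep := cycleWalk_layerStep_add_one hn hp i
  rw [abs_eq zero_le_one]
  by_cases hi : i ∈ S
  · have hi₁ := hsparse i hi
    simp only [layerStep, hi, hi₁, if_true, if_false] at hstep
    rw [ofCode_of_notMem hp hi₁, hstep, ofCode]
    dsimp only
    split_ifs <;> omega
  · rw [ofCode_of_notMem hp hi]
    by_cases hi₁ : i + 1 ∈ S
    · simp only [layerStep, hi₁, if_true] at hstep
      rw [ofCode, hstep]
      dsimp only
      split_ifs <;> omega
    · simp only [layerStep, hi, hi₁, if_false] at hstep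
      rw [ofCode_of_notMem hp hi₁, hstep]
      split_ifs <;> omega

lemma isHomZ_ofCode (hn : Even n) (hp : ⟨S, E, φ⟩ ∈ codes n k ℓ) :
    IsHomZ (Cnk n k) (ofCode ⟨S, E, φ⟩) := by
  rintro ⟨i, s⟩ ⟨j, t⟩ hadj
  obtain ⟨-, rfl | rfl⟩ := Cnk_adj_iff.mp hadj
  · exact abs_ofCode_sub_ofCode_add_one hn hp i s t
  · rw [abs_sub_comm]
    exact abs_ofCode_sub_ofCode_add_one hn hp j t s

lemma ofCode_mem_H0nkL (hn : Even n) (hk : 0 < k) (hp : ⟨S, E, φ⟩ ∈ codes n k ℓ) :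
    ofCode ⟨S, E, φ⟩ ∈ H0nkL n k hk ℓ := by
  have h0 := (mem_sparseSets.mp (mem_codes.mp hp).1).2.1
  have hzero : ∀ s, ofCode ⟨S, E, φ⟩ (0, s) = 0 := fun s => by
    rw [ofCode_of_notMem hp h0, cycleWalk_zero]
  refine ⟨⟨⟨isHomZ_ofCode hn hp, hzero _⟩, hzero⟩, ?_⟩
  rw [← coe_nonconstLayers, nonconstLayers_ofCode hp, Set.ncard_coe_finset,
    (mem_sparseSets.mp (mem_codes.mp hp).1).1]

end Encoding

section Inverse
variable {n k : ℕ} [NeZero n] (s₀ : Fin k) {ℓ : ℕ} {S E : Finset (ZMod n)}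
  {φ : ZMod n → Fin k → Bool}

lemma topValue_ofCode (hn : Even n) (hp : ⟨S, E, φ⟩ ∈ codes n k ℓ) :
    topValue s₀ (ofCode ⟨S, E, φ⟩) = cycleWalk (layerStep S E) := by
  funext i
  have hconst : ¬LayerConst (ofCode ⟨S, E, φ⟩) i ↔ i ∈ S := by
    rw [← mem_nonconstLayers, nonconstLayers_ofCode hp]
  by_cases hi : i ∈ S
  · have hi₁ := (mem_sparseSets.mp (mem_codes.mp hp).1).2.2 i hi
    rw [topValue, if_neg (hconst.mpr hi), ofCode_of_notMem hp hi₁,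
      cycleWalk_layerStep_add_one hn hp]
    simp [layerStep, hi, hi₁]
  · rw [topValue, if_pos (not_not.mp (hconst.not.mpr hi)), ofCode_of_notMem hp hi]

lemma toCode_ofCode (hn : Even n) (hp : ⟨S, E, φ⟩ ∈ codes n k ℓ) :
    toCode s₀ (ofCode ⟨S, E, φ⟩) = ⟨S, E, φ⟩ := by
  have hS := nonconstLayers_ofCode hp
  have hE := (mem_codes.mp hp).2.1
  rw [toCode, topValue_ofCode s₀ hn hp, upSteps, hS, Sigma.mk.injEq]
  refine ⟨rfl, heq_of_eq (Prod.ext ?_ ?_)⟩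
  · have hup : ∀ j ∈ freeSteps S,
        ofCode ⟨S, E, φ⟩ (j + 1, s₀) = ofCode ⟨S, E, φ⟩ (j, s₀) + 1 ↔ j ∈ E := fun j hj => by
      obtain ⟨hj, hj₁⟩ := (mem_filter.mp hj).2
      rw [ofCode_of_notMem hp hj₁, ofCode_of_notMem hp hj, cycleWalk_layerStep_add_one hn hp]
      simp only [layerStep, hj, hj₁, if_false]
      split_ifs with hjE <;> simpa
    ext j
    rw [mem_filter]
    exact ⟨fun ⟨hj, h⟩ => (hup j hj).1 h, fun h => ⟨hE h, (hup j (hE h)).2 h⟩⟩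
  · funext i s
    simp only [ofCode]
    rcases Bool.eq_false_or_eq_true (φ i s) with h | h <;> simp [h]

variable [Nontrivial (ZMod n)] {f : ZMod n × Fin k → ℤ}

lemma toCode_mem_codes (hk : 0 < k) (hf : f ∈ H0nkL n k hk ℓ) : toCode s₀ f ∈ codes n k ℓ := by
  obtain ⟨⟨⟨hhom, -⟩, h0⟩, hℓ⟩ := hf
  rw [← coe_nonconstLayers, Set.ncard_coe_finset] at hℓ
  have hsum := hhom.sum_layerStep_eq_zero s₀
  rw [sum_layerStep (upSteps_subset s₀ f), hℓ] at hsum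
  refine mem_codes.mpr ⟨mem_sparseSets.mpr ⟨hℓ, ?_, ?_⟩, upSteps_subset s₀ f, by omega,
    mem_layerPatterns.mpr ⟨?_, ?_⟩⟩
  · simpa using layerConst_zero h0
  · intro i hi
    simpa using hhom.layerConst_add_one (mem_nonconstLayers.mp hi)
  · intro i hi
    obtain ⟨s, t, hst⟩ : ∃ s t, f (i, s) ≠ f (i, t) := by
      simpa [LayerConst] using mem_nonconstLayers.mp hi
    refine ⟨s, t, ?_⟩
    have := hhom.eq_topValue_or s₀ i s
    have := hhom.eq_topValue_or s₀ i t
    simp only [ne_eq, decide_eq_decide]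
    omega
  · intro i hi s
    have hconst : LayerConst f i := by simpa using hi
    simp [topValue, hconst, hconst s s₀]

lemma ofCode_toCode (hf : IsHomZ (Cnk n k) f) (h0 : ∀ s, f (0, s) = 0) :
    ofCode (toCode s₀ f) = f := by
  have hwalk : cycleWalk (layerStep (nonconstLayers f) (upSteps s₀ f)) = topValue s₀ f := by
    refine eq_of_sub_eq_sub ?_ fun i => ?_
    · rw [cycleWalk_zero, topValue, if_pos (layerConst_zero h0), h0]
    · rw [cycleWalk_add_one (hf.sum_layerStep_eq_zero s₀), hf.topValue_add_one s₀]
      ring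
  funext ⟨i, s⟩
  simp only [ofCode, toCode, hwalk]
  rcases hf.eq_topValue_or s₀ i s with h | h <;> simp [h]

end Inverse

theorem stmt13_general (n k : ℕ) (hn : 4 ≤ n) (hne : Even n) (hk : 0 < k)
    (ℓ : ℕ) :
    (H0nkL n k hk ℓ).ncard
      = (n - ℓ).choose ℓ * (n - 2 * ℓ).choose (n / 2 - ℓ) * (2 ^ k - 2) ^ ℓ := by
  have : Fact (1 < n) := ⟨by omega⟩
  have : NeZero n := ⟨by omega⟩
  let s₀ : Fin k := ⟨0, hk⟩
  have hbij : Set.BijOn ofCode (codes n k ℓ : Set (Code n k)) (H0nkL n k hk ℓ) :=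
    Set.InvOn.bijOn
      ⟨fun _ hp => toCode_ofCode s₀ hne hp, fun _ hf => ofCode_toCode s₀ hf.1.1.1 hf.1.2⟩
      (fun _ hp => ofCode_mem_H0nkL hne hk hp) (fun _ hf => toCode_mem_codes s₀ hk hf)
  rw [← hbij.ncard_eq, Set.ncard_coe_finset, card_codes hk]

theorem stmt13 (n k : ℕ) (hn : 4 ≤ n) (hne : Even n) (hk : 0 < k)
    (ℓ : ℕ) (hℓ : ℓ ≤ n / 2) :
    (H0nkL n k hk ℓ).ncard
      = (n - ℓ).choose ℓ * (n - 2 * ℓ).choose (n / 2 - ℓ) * (2 ^ k - 2) ^ ℓ :=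
  stmt13_general n k hn hne hk ℓ
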